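/- Let d ≥ 1, C_g > 0, λ ≥ C_g², C_h ≥ 0, F ≥ 0, n ≥ 0 and T ≥ 1. Let g_1, …, g_T ∈ ℝ^d satisfy ‖g_t‖₂ ≤ C_g for all t; define Σ_t = λI + Σ_{i=1}^{t-1} g_i g_iᵀ and u_t = ‖g_t‖_{Σ_t^{-1}}. Let 0 < β_1 ≤ … ≤ β_T be nondecreasing. Let r'_1, …, r'_n be reals with r'_j ≤ 2F for all j, and let r_1, …, r_T be nonnegative reals with r_t ≤ 2√(β_t)·u_t + 2β_t C_h/λ for all t. Then the total sum satisfies Σ_{j=1}^n r'_j + Σ_{t=1}^T r_t ≤ 2nF + √( T·(16 β_T d · log(1 + T·C_g²/(d·λ)) + 8 β_T² C_h² T / λ²) ). -/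

import Mathlib

/-!
Phase I contributes at most `2F` per round. For Phase II write `q_t = g_tᵀ Σ_t⁻¹ g_t = u_t²`;
then `r_t² ≤ 8 β_T q_t + 8 β_T² C_h² / λ²`, and by Cauchy–Schwarz `(∑ r_t)² ≤ T ∑ r_t²`, so it
remains to bound `∑ q_t` (elliptical potential lemma). Since `Σ_t ⪰ λ I` and `‖g_t‖² ≤ C_g² ≤ λ`,
each `q_t ≤ 1`, hence `q_t ≤ 2 log (1 + q_t)`. By the matrix determinant lemma
`det Σ_{t+1} = det Σ_t (1 + q_t)`, so these logarithms telescope to `log det Σ_{T+1} - d log λ`,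
and AM–GM on the eigenvalues bounds `log det Σ_{T+1}` by `d log (tr Σ_{T+1} / d)
≤ d log (λ + T C_g² / d)`.
-/

open Matrix Finset

lemma Real.sum_log_le_card_mul_log_mean {α : Type*} {s : Finset α} (hs : s.Nonempty)
    {f : α → ℝ} (hf : ∀ i ∈ s, 0 < f i) :
    ∑ i ∈ s, Real.log (f i) ≤ #s * Real.log ((∑ i ∈ s, f i) / #s) := by
  have hcard : (0 : ℝ) < #s := by exact_mod_cast hs.card_pos
  have jensen := strictConcaveOn_log_Ioi.concaveOn.le_map_sum (t := s) (w := fun _ => (#s : ℝ)⁻¹)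
    (p := f) (fun _ _ => by positivity) (by simp [hcard.ne']) hf
  simp only [smul_eq_mul, ← mul_sum] at jensen
  rw [inv_mul_eq_div, inv_mul_eq_div] at jensen
  calc ∑ i ∈ s, Real.log (f i) = #s * ((∑ i ∈ s, Real.log (f i)) / #s) := by field_simp
    _ ≤ #s * Real.log ((∑ i ∈ s, f i) / #s) := by gcongr

lemma Real.le_two_mul_log_one_add {x : ℝ} (h0 : 0 ≤ x) (h2 : x ≤ 2) :
    x ≤ 2 * Real.log (1 + x) := by
  have h := Real.le_log_one_add_of_nonneg h0
  rw [div_le_iff₀ (by linarith)] at h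
  nlinarith

namespace Matrix

variable {ι : Type*} [Fintype ι]

lemma posSemidef_sum_vecMulVec_self {α : Type*} (s : Finset α) (v : α → ι → ℝ) :
    (∑ i ∈ s, vecMulVec (v i) (v i)).PosSemidef :=
  posSemidef_sum s fun i _ => by simpa using posSemidef_vecMulVec_self_star (v i)

variable [DecidableEq ι]

lemma PosDef.log_det_le [Nonempty ι] {A : Matrix ι ι ℝ} (hA : A.PosDef) :
    Real.log A.det ≤ Fintype.card ι * Real.log (A.trace / Fintype.card ι) := by
  rw [hA.isHermitian.det_eq_prod_eigenvalues, hA.isHermitian.trace_eq_sum_eigenvalues]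
  simp only [RCLike.ofReal_real_eq_id, id]
  rw [Real.log_prod fun i _ => (hA.eigenvalues_pos i).ne']
  simpa using Real.sum_log_le_card_mul_log_mean univ_nonempty fun i _ => hA.eigenvalues_pos i

lemma det_add_vecMulVec {A : Matrix ι ι ℝ} (hA : IsUnit A.det) (u v : ι → ℝ) :
    (A + vecMulVec u v).det = A.det * (1 + v ⬝ᵥ (A⁻¹ *ᵥ u)) := by
  rw [vecMulVec_eq Unit, det_add_replicateCol_mul_replicateRow hA, Matrix.mul_assoc,
    ← replicateCol_mulVec, det_unique (n := Unit)]
  rfl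

lemma PosDef.dotProduct_inv_mulVec_nonneg {A : Matrix ι ι ℝ} (hA : A.PosDef) (v : ι → ℝ) :
    0 ≤ v ⬝ᵥ (A⁻¹ *ᵥ v) := by
  simpa using hA.inv.posSemidef.dotProduct_mulVec_nonneg v

lemma PosDef.dotProduct_inv_mulVec_le {A : Matrix ι ι ℝ} (hA : A.PosDef) {lam : ℝ} (hlam : 0 < lam)
    (hge : ∀ y, lam * (y ⬝ᵥ y) ≤ y ⬝ᵥ (A *ᵥ y)) (v : ι → ℝ) :
    v ⬝ᵥ (A⁻¹ *ᵥ v) ≤ (v ⬝ᵥ v) / lam := by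
  set y := A⁻¹ *ᵥ v
  have hAy : A *ᵥ y = v := by
    rw [mulVec_mulVec, mul_nonsing_inv _ hA.det_pos.ne'.isUnit, one_mulVec]
  have hlow : lam * (y ⬝ᵥ y) ≤ v ⬝ᵥ y := by simpa [hAy, dotProduct_comm y v] using hge y
  have hcs : (v ⬝ᵥ y) ^ 2 ≤ (v ⬝ᵥ v) * (y ⬝ᵥ y) := by
    simpa [dotProduct, pow_two] using sum_mul_sq_le_sq_mul_sq univ v y
  have hvv : 0 ≤ v ⬝ᵥ v := dotProduct_self_star_nonneg v
  rw [le_div_iff₀ hlam]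
  nlinarith [mul_le_mul_of_nonneg_left hlow hvv, mul_le_mul_of_nonneg_left hcs hlam.le]

end Matrix

section DesignMatrix

variable {ι : Type*} [DecidableEq ι] {lam : ℝ} {g : ℕ → ι → ℝ}

/-- The paper's `Σ_t`. -/
def designMatrix (lam : ℝ) (g : ℕ → ι → ℝ) (t : ℕ) : Matrix ι ι ℝ :=
  lam • 1 + ∑ i ∈ Ico 1 t, vecMulVec (g i) (g i)

lemma designMatrix_succ {t : ℕ} (ht : 1 ≤ t) :
    designMatrix lam g (t + 1) = designMatrix lam g t + vecMulVec (g t) (g t) := by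
  rw [designMatrix, designMatrix, sum_Ico_succ_top ht, add_assoc]

variable [Fintype ι]

lemma mul_dotProduct_self_le_designMatrix (t : ℕ) (y : ι → ℝ) :
    lam * (y ⬝ᵥ y) ≤ y ⬝ᵥ (designMatrix lam g t *ᵥ y) := by
  have := (posSemidef_sum_vecMulVec_self (Ico 1 t) g).dotProduct_mulVec_nonneg y
  simp only [star_trivial] at this
  simp only [designMatrix, add_mulVec, dotProduct_add, smul_mulVec, one_mulVec, dotProduct_smul,
    smul_eq_mul]
  linarith

lemma posDef_designMatrix (hlam : 0 < lam) (t : ℕ) : (designMatrix lam g t).PosDef := by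
  refine PosDef.add_posSemidef ?_ (posSemidef_sum_vecMulVec_self _ g)
  rw [smul_one_eq_diagonal]
  exact posDef_diagonal_iff.mpr fun _ => hlam

lemma trace_designMatrix (t : ℕ) :
    (designMatrix lam g t).trace = lam * Fintype.card ι + ∑ i ∈ Ico 1 t, g i ⬝ᵥ g i := by
  simp [designMatrix, trace_sum, trace_vecMulVec]

lemma log_det_designMatrix (hlam : 0 < lam) (T : ℕ) :
    Real.log (designMatrix lam g (T + 1)).det = Fintype.card ι * Real.log lam +
      ∑ t ∈ Icc 1 T, Real.log (1 + g t ⬝ᵥ ((designMatrix lam g t)⁻¹ *ᵥ g t)) := by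
  induction T with
  | zero => simp [designMatrix, Real.log_pow]
  | succ T ih =>
    have hpd := posDef_designMatrix (g := g) hlam (T + 1)
    have hpot := hpd.dotProduct_inv_mulVec_nonneg (g (T + 1))
    rw [designMatrix_succ (by omega), det_add_vecMulVec hpd.det_pos.ne'.isUnit,
      Real.log_mul hpd.det_pos.ne' (by positivity), ih, sum_Icc_succ_top (by omega)]
    ring

theorem sum_dotProduct_inv_designMatrix_le [Nonempty ι] (hlam : 0 < lam) {C : ℝ} (hC : C ≤ lam)
    {T : ℕ} (hg : ∀ t ∈ Icc 1 T, g t ⬝ᵥ g t ≤ C) :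
    ∑ t ∈ Icc 1 T, g t ⬝ᵥ ((designMatrix lam g t)⁻¹ *ᵥ g t) ≤
      2 * (Fintype.card ι * Real.log (1 + T * C / (Fintype.card ι * lam))) := by
  set d : ℝ := (Fintype.card ι : ℝ)
  have hd : 0 < d := by simp [d, Fintype.card_pos]
  have hpot : ∀ t ∈ Icc 1 T, g t ⬝ᵥ ((designMatrix lam g t)⁻¹ *ᵥ g t) ≤
      2 * Real.log (1 + g t ⬝ᵥ ((designMatrix lam g t)⁻¹ *ᵥ g t)) := by
    intro t ht
    have hpd := posDef_designMatrix (g := g) hlam t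
    refine Real.le_two_mul_log_one_add (hpd.dotProduct_inv_mulVec_nonneg (g t)) ?_
    calc _ ≤ g t ⬝ᵥ g t / lam :=
          hpd.dotProduct_inv_mulVec_le hlam (mul_dotProduct_self_le_designMatrix t) (g t)
      _ ≤ 1 := (div_le_one hlam).mpr ((hg t ht).trans hC)
      _ ≤ 2 := one_le_two
  have htrace : (designMatrix lam g (T + 1)).trace ≤ lam * d + T * C := by
    have := sum_le_card_nsmul (Icc 1 T) _ C hg
    rw [trace_designMatrix, Ico_add_one_right_eq_Icc]
    simp only [Nat.card_Icc, add_tsub_cancel_right, nsmul_eq_mul] at this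
    linarith
  have htrace_pos : 0 < (designMatrix lam g (T + 1)).trace :=
    (posDef_designMatrix hlam _).trace_pos
  have hlogdet : Real.log (designMatrix lam g (T + 1)).det ≤
      d * Real.log ((lam * d + T * C) / d) :=
    (posDef_designMatrix hlam _).log_det_le.trans <| mul_le_mul_of_nonneg_left
      (Real.log_le_log (by positivity) (div_le_div_of_nonneg_right htrace hd.le)) hd.le
  calc _ ≤ ∑ t ∈ Icc 1 T, 2 * Real.log (1 + g t ⬝ᵥ ((designMatrix lam g t)⁻¹ *ᵥ g t)) :=
        sum_le_sum hpot
    _ = 2 * (Real.log (designMatrix lam g (T + 1)).det - d * Real.log lam) := by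
        rw [log_det_designMatrix hlam, ← mul_sum]; ring
    _ ≤ 2 * (d * Real.log ((lam * d + T * C) / d) - d * Real.log lam) := by gcongr
    _ = 2 * (d * Real.log (1 + T * C / (d * lam))) := by
        have : 0 < (lam * d + T * C) / d := by
          apply div_pos _ hd
          linarith
        rw [← mul_sub, ← Real.log_div this.ne' hlam.ne']
        congr 3
        field_simp

end DesignMatrix

lemma Finset.sum_le_sqrt_card_mul_of_sum_sq_le {α : Type*} {s : Finset α} {f : α → ℝ} {X : ℝ}
    (h : ∑ i ∈ s, f i ^ 2 ≤ X) : ∑ i ∈ s, f i ≤ √(#s * X) :=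
  (le_abs_self _).trans <| Real.abs_le_sqrt <| sq_sum_le_card_mul_sum_sq.trans (by gcongr)

lemma Finset.sum_le_sqrt_of_sq_le_mul_add {α : Type*} {s : Finset α} {r q : α → ℝ} {a c P : ℝ}
    (ha : 0 ≤ a) (hq : ∑ i ∈ s, q i ≤ P) (hr : ∀ i ∈ s, r i ^ 2 ≤ a * q i + c) :
    ∑ i ∈ s, r i ≤ √(#s * (a * P + #s * c)) := by
  refine sum_le_sqrt_card_mul_of_sum_sq_le ((sum_le_sum hr).trans ?_)
  rw [sum_add_distrib, ← mul_sum, sum_const, nsmul_eq_mul]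
  gcongr

lemma sq_le_of_le_two_mul_sqrt_mul_add {r β β' u c : ℝ} (hr : 0 ≤ r) (hβ : 0 ≤ β) (hββ' : β ≤ β')
    (h : r ≤ 2 * √β * u + 2 * β * c) : r ^ 2 ≤ 8 * β' * u ^ 2 + 8 * β' ^ 2 * c ^ 2 :=
  calc r ^ 2 ≤ (2 * √β * u + 2 * β * c) ^ 2 := pow_le_pow_left₀ hr h 2
    _ ≤ 2 * ((2 * √β * u) ^ 2 + (2 * β * c) ^ 2) := add_sq_le
    _ = 8 * β * u ^ 2 + 8 * β ^ 2 * c ^ 2 := by rw [mul_pow, mul_pow, Real.sq_sqrt hβ]; ring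
    _ ≤ 8 * β' * u ^ 2 + 8 * β' ^ 2 * c ^ 2 := by gcongr

theorem total_regret_bound_general
    (d : ℕ) (hd : 1 ≤ d) (Cg lam Ch F : ℝ) (hCg : 0 < Cg) (hlam : Cg ^ 2 ≤ lam)
    (n : ℕ) (T : ℕ) (hT : 1 ≤ T) (g : ℕ → Fin d → ℝ)
    (hg : ∀ t, 1 ≤ t → t ≤ T → Real.sqrt (g t ⬝ᵥ g t) ≤ Cg)
    (S : ℕ → Matrix (Fin d) (Fin d) ℝ)
    (hS : ∀ t, S t = lam • (1 : Matrix (Fin d) (Fin d) ℝ) +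
      ∑ i ∈ Finset.Ico 1 t, vecMulVec (g i) (g i))
    (u : ℕ → ℝ)
    (hu : ∀ t, u t = Real.sqrt (g t ⬝ᵥ ((S t)⁻¹ *ᵥ g t)))
    (β : ℕ → ℝ) (hβ1 : 0 < β 1)
    (hβmono : ∀ s t, 1 ≤ s → s ≤ t → t ≤ T → β s ≤ β t)
    (r' : ℕ → ℝ) (hr' : ∀ j, 1 ≤ j → j ≤ n → r' j ≤ 2 * F)
    (r : ℕ → ℝ) (hr0 : ∀ t, 1 ≤ t → t ≤ T → 0 ≤ r t)
    (hr : ∀ t, 1 ≤ t → t ≤ T → r t ≤ 2 * Real.sqrt (β t) * u t + 2 * β t * Ch / lam) :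
    ∑ j ∈ Finset.Icc 1 n, r' j + ∑ t ∈ Finset.Icc 1 T, r t ≤
      2 * n * F +
        Real.sqrt (T * (16 * β T * d * Real.log (1 + T * Cg ^ 2 / (d * lam)) +
          8 * β T ^ 2 * Ch ^ 2 * T / lam ^ 2)) := by
  have hlam0 : 0 < lam := (pow_pos hCg 2).trans_le hlam
  have : Nonempty (Fin d) := ⟨⟨0, hd⟩⟩
  obtain rfl : S = designMatrix lam g := funext hS
  have hphase1 : ∑ j ∈ Icc 1 n, r' j ≤ 2 * n * F := by
    calc _ ≤ #(Icc 1 n) • (2 * F) :=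
          sum_le_card_nsmul _ _ _ fun j hj => hr' j (mem_Icc.1 hj).1 (mem_Icc.1 hj).2
      _ = 2 * n * F := by simp only [Nat.card_Icc, add_tsub_cancel_right, nsmul_eq_mul]; ring
  have hpotential := sum_dotProduct_inv_designMatrix_le hlam0 hlam (T := T)
    fun t ht => (Real.sqrt_le_iff.1 (hg t (mem_Icc.1 ht).1 (mem_Icc.1 ht).2)).2
  have hstep : ∀ t ∈ Icc 1 T, r t ^ 2 ≤ 8 * β T * (g t ⬝ᵥ ((designMatrix lam g t)⁻¹ *ᵥ g t)) +
      8 * β T ^ 2 * (Ch / lam) ^ 2 := by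
    intro t ht
    obtain ⟨ht1, htT⟩ := mem_Icc.1 ht
    have := sq_le_of_le_two_mul_sqrt_mul_add (hr0 t ht1 htT)
      (hβ1.le.trans (hβmono 1 t le_rfl ht1 htT)) (hβmono t T ht1 htT le_rfl) (c := Ch / lam)
      (by simpa only [mul_div_assoc] using hr t ht1 htT)
    rwa [hu t, Real.sq_sqrt ((posDef_designMatrix hlam0 t).dotProduct_inv_mulVec_nonneg _)] at this
  have hβT : 0 ≤ 8 * β T := by linarith [hβmono 1 T le_rfl hT le_rfl]
  have hphase2 := sum_le_sqrt_of_sq_le_mul_add hβT hpotential hstep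
  simp only [Nat.card_Icc, add_tsub_cancel_right, Fintype.card_fin] at hphase2
  calc _ ≤ 2 * n * F + _ := add_le_add hphase1 hphase2
    _ = _ := by congr 2; ring

/-- Deterministic aggregation step of the paper's Theorem 4.1: Phase I regrets
are each at most `2F`, and Phase II regrets are summed via Cauchy–Schwarz and
the sum-of-squares bound, giving
`∑_{j=1}^n r'_j + ∑_{t=1}^T r_t ≤ 2nF + √(T(16 β_T d log(1 + T C_g²/(dλ)) + 8 β_T² C_h² T/λ²))`. -/
theorem total_regret_bound
    (d : ℕ) (hd : 1 ≤ d) (Cg lam Ch F : ℝ) (hCg : 0 < Cg) (hlam : Cg ^ 2 ≤ lam)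
    (hCh : 0 ≤ Ch) (hF : 0 ≤ F)
    (n : ℕ) (T : ℕ) (hT : 1 ≤ T) (g : ℕ → Fin d → ℝ)
    (hg : ∀ t, 1 ≤ t → t ≤ T → Real.sqrt (g t ⬝ᵥ g t) ≤ Cg)
    (S : ℕ → Matrix (Fin d) (Fin d) ℝ)
    (hS : ∀ t, S t = lam • (1 : Matrix (Fin d) (Fin d) ℝ) +
      ∑ i ∈ Finset.Ico 1 t, vecMulVec (g i) (g i))
    (u : ℕ → ℝ)
    (hu : ∀ t, u t = Real.sqrt (g t ⬝ᵥ ((S t)⁻¹ *ᵥ g t)))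
    (β : ℕ → ℝ) (hβ1 : 0 < β 1)
    (hβmono : ∀ s t, 1 ≤ s → s ≤ t → t ≤ T → β s ≤ β t)
    (r' : ℕ → ℝ) (hr' : ∀ j, 1 ≤ j → j ≤ n → r' j ≤ 2 * F)
    (r : ℕ → ℝ) (hr0 : ∀ t, 1 ≤ t → t ≤ T → 0 ≤ r t)
    (hr : ∀ t, 1 ≤ t → t ≤ T → r t ≤ 2 * Real.sqrt (β t) * u t + 2 * β t * Ch / lam) :
    ∑ j ∈ Finset.Icc 1 n, r' j + ∑ t ∈ Finset.Icc 1 T, r t ≤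
      2 * n * F +
        Real.sqrt (T * (16 * β T * d * Real.log (1 + T * Cg ^ 2 / (d * lam)) +
          8 * β T ^ 2 * Ch ^ 2 * T / lam ^ 2)) :=
  total_regret_bound_general d hd Cg lam Ch F hCg hlam n T hT g hg S hS u hu β hβ1 hβmono r' hr' r
    hr0 hr
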